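/- Let Ψ satisfy the standing growth and uniform recession assumptions, and let F := Ψ^{1/2}. Then (F^qc)^∞ = (F^∞)^qc, i.e. the operations of quasiconvexification and taking the recession function commute for Ψ^{1/2}. -/

import Mathlib

open MeasureTheory Filter Set

noncomputable section

/-- Frobenius norm of a real matrix. -/
def frob {m n : ℕ} (ξ : Matrix (Fin m) (Fin n) ℝ) : ℝ :=
  Real.sqrt (∑ i, ∑ j, (ξ i j) ^ 2)

/-- Convex envelope on a set `s`: the pointwise supremum of all functions convex on `s`
and bounded above by `f` on `s`. -/
def convEnvOn {E : Type*} [AddCommGroup E] [Module ℝ E] (s : Set E) (f : E → ℝ) : E → ℝ :=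
  fun x => sSup {y | ∃ g : E → ℝ, ConvexOn ℝ s g ∧ (∀ z ∈ s, g z ≤ f z) ∧ y = g x}

/-- The open unit cube `(0,1)^n`. -/
def unitCube (n : ℕ) : Set (Fin n → ℝ) := Set.univ.pi fun _ => Set.Ioo (0 : ℝ) 1

/-- The gradient of `φ : ℝ^n → ℝ^m` as an `m × n` matrix. -/
def gradMatrix {m n : ℕ} (φ : (Fin n → ℝ) → (Fin m → ℝ)) (x : Fin n → ℝ) :
    Matrix (Fin m) (Fin n) ℝ := fun i j => fderiv ℝ φ x (Pi.single j 1) i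

/-- Smooth test functions compactly supported in the open unit cube. -/
def testFuns (m n : ℕ) : Set ((Fin n → ℝ) → (Fin m → ℝ)) :=
  {φ | ContDiff ℝ (⊤ : ℕ∞) φ ∧ HasCompactSupport φ ∧ tsupport φ ⊆ unitCube n}

/-- The quasiconvex envelope of `h`. -/
def qcEnv {m n : ℕ} (h : Matrix (Fin m) (Fin n) ℝ → ℝ)
    (ξ : Matrix (Fin m) (Fin n) ℝ) : ℝ :=
  sInf {y | ∃ φ ∈ testFuns m n, y = ∫ x in unitCube n, h (ξ + gradMatrix φ x)}

/-- The recession function `F^∞(ξ) = limsup_{t→∞} F(tξ)/t`. -/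
def recession {m n : ℕ} (F : Matrix (Fin m) (Fin n) ℝ → ℝ)
    (ξ : Matrix (Fin m) (Fin n) ℝ) : ℝ :=
  Filter.limsup (fun t : ℝ => F (t • ξ) / t) Filter.atTop

section Aux
variable {m n : ℕ}

lemma frob_nonneg (ξ : Matrix (Fin m) (Fin n) ℝ) : 0 ≤ frob ξ := Real.sqrt_nonneg _

lemma frob_sq (ξ : Matrix (Fin m) (Fin n) ℝ) : frob ξ ^ 2 = ∑ i, ∑ j, ξ i j ^ 2 :=
  Real.sq_sqrt (by positivity)

lemma frob_smul (t : ℝ) (ξ : Matrix (Fin m) (Fin n) ℝ) : frob (t • ξ) = |t| * frob ξ := by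
  unfold frob
  rw [← Real.sqrt_sq_eq_abs, ← Real.sqrt_mul (sq_nonneg t)]
  congr 1
  rw [Finset.mul_sum]
  refine Finset.sum_congr rfl fun i _ => ?_
  rw [Finset.mul_sum]
  refine Finset.sum_congr rfl fun j _ => ?_
  simp [Matrix.smul_apply, smul_eq_mul]
  ring

lemma frob_continuous : Continuous (frob (m:=m) (n:=n)) := by
  unfold frob
  refine Real.continuous_sqrt.comp ?_
  refine continuous_finset_sum _ fun i _ => continuous_finset_sum _ fun j _ => ?_
  exact ((continuous_apply j).comp (continuous_apply i)).pow 2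

end Aux
section Aux2
variable {m n : ℕ} {c : ℝ} {Ψ Ψinf : Matrix (Fin m) (Fin n) ℝ → ℝ}

lemma abs_sqrt_sub_sqrt {a b : ℝ} (ha : 0 ≤ a) (hb : 0 ≤ b) :
    |Real.sqrt a - Real.sqrt b| ≤ Real.sqrt |a - b| := by
  rcases le_total b a with h | h
  · have hm : Real.sqrt b ≤ Real.sqrt a := Real.sqrt_le_sqrt h
    rw [abs_of_nonneg (sub_nonneg.2 hm), abs_of_nonneg (sub_nonneg.2 h)]
    have hx := Real.sq_sqrt ha
    have hy := Real.sq_sqrt hb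
    have hz := Real.sq_sqrt (sub_nonneg.2 h)
    have hy0 := Real.sqrt_nonneg b
    have hz0 := Real.sqrt_nonneg (a - b)
    nlinarith [Real.sqrt_nonneg a]
  · have hm : Real.sqrt a ≤ Real.sqrt b := Real.sqrt_le_sqrt h
    rw [abs_of_nonpos (sub_nonpos.2 hm), abs_sub_comm, abs_of_nonneg (sub_nonneg.2 h)]
    have hx := Real.sq_sqrt ha
    have hy := Real.sq_sqrt hb
    have hz := Real.sq_sqrt (sub_nonneg.2 h)
    have hy0 := Real.sqrt_nonneg a
    have hz0 := Real.sqrt_nonneg (b - a)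
    nlinarith [Real.sqrt_nonneg b]

lemma psinf_lb (hc : 1 ≤ c) (hlb : ∀ ξ, max ((frob ξ) ^ 2 / c - c) 0 ≤ Ψ ξ)
    (hlim : ∀ ξ, Filter.Tendsto (fun t : ℝ => Ψ (t • ξ) / t ^ 2) Filter.atTop (nhds (Ψinf ξ)))
    (ξ : Matrix (Fin m) (Fin n) ℝ) : (frob ξ) ^ 2 / c ≤ Ψinf ξ := by
  have hc0 : (0:ℝ) < c := by linarith
  have h1 : Filter.Tendsto (fun t : ℝ => (frob ξ) ^ 2 / c - c / t ^ 2) Filter.atTop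
      (nhds ((frob ξ) ^ 2 / c - 0)) := by
    refine Filter.Tendsto.sub tendsto_const_nhds ?_
    exact Filter.Tendsto.div_atTop tendsto_const_nhds (tendsto_pow_atTop (by norm_num) |>.comp tendsto_id)
  rw [sub_zero] at h1
  refine le_of_tendsto_of_tendsto h1 (hlim ξ) ?_
  filter_upwards [Filter.eventually_ge_atTop (1:ℝ)] with t ht
  have ht0 : (0:ℝ) < t := by linarith
  have hfs : frob (t • ξ) = t * frob ξ := by rw [frob_smul, abs_of_pos ht0]
  have h2 : (t * frob ξ) ^ 2 / c - c ≤ Ψ (t • ξ) := le_trans (le_max_left _ _) (by rw [← hfs]; exact hlb _)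
  have ht2 : (0:ℝ) < t ^ 2 := by positivity
  have h3 : ((t * frob ξ) ^ 2 / c - c) / t ^ 2 ≤ Ψ (t • ξ) / t ^ 2 := by gcongr
  calc (frob ξ) ^ 2 / c - c / t ^ 2 = ((t * frob ξ) ^ 2 / c - c) / t ^ 2 := by
        field_simp
    _ ≤ _ := h3

lemma psinf_ub (hc : 1 ≤ c) (hub : ∀ ξ, Ψ ξ ≤ c * ((frob ξ) ^ 2 + 1))
    (hlim : ∀ ξ, Filter.Tendsto (fun t : ℝ => Ψ (t • ξ) / t ^ 2) Filter.atTop (nhds (Ψinf ξ)))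
    (ξ : Matrix (Fin m) (Fin n) ℝ) : Ψinf ξ ≤ c * (frob ξ) ^ 2 := by
  have hc0 : (0:ℝ) < c := by linarith
  have h1 : Filter.Tendsto (fun t : ℝ => c * (frob ξ) ^ 2 + c / t ^ 2) Filter.atTop
      (nhds (c * (frob ξ) ^ 2 + 0)) := by
    refine Filter.Tendsto.add tendsto_const_nhds ?_
    exact Filter.Tendsto.div_atTop tendsto_const_nhds (tendsto_pow_atTop (by norm_num) |>.comp tendsto_id)
  rw [add_zero] at h1
  refine le_of_tendsto_of_tendsto (hlim ξ) h1 ?_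
  filter_upwards [Filter.eventually_ge_atTop (1:ℝ)] with t ht
  have ht0 : (0:ℝ) < t := by linarith
  have hfs : frob (t • ξ) = t * frob ξ := by rw [frob_smul, abs_of_pos ht0]
  have ht2 : (0:ℝ) < t ^ 2 := by positivity
  have h2 : Ψ (t • ξ) ≤ c * ((t * frob ξ) ^ 2 + 1) := by rw [← hfs]; exact hub _
  have h3 : Ψ (t • ξ) / t ^ 2 ≤ (c * ((t * frob ξ) ^ 2 + 1)) / t ^ 2 := by gcongr
  refine h3.trans (le_of_eq ?_)
  field_simp

lemma psinf_nonneg (hc : 1 ≤ c) (hlb : ∀ ξ, max ((frob ξ) ^ 2 / c - c) 0 ≤ Ψ ξ)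
    (hlim : ∀ ξ, Filter.Tendsto (fun t : ℝ => Ψ (t • ξ) / t ^ 2) Filter.atTop (nhds (Ψinf ξ)))
    (ξ : Matrix (Fin m) (Fin n) ℝ) : 0 ≤ Ψinf ξ := by
  have := psinf_lb hc hlb hlim ξ
  have hc0 : (0:ℝ) < c := by linarith
  exact le_trans (by positivity) this

lemma psinf_smul (hlim : ∀ ξ, Filter.Tendsto (fun t : ℝ => Ψ (t • ξ) / t ^ 2) Filter.atTop (nhds (Ψinf ξ)))
    {s : ℝ} (hs : 0 < s) (ξ : Matrix (Fin m) (Fin n) ℝ) : Ψinf (s • ξ) = s ^ 2 * Ψinf ξ := by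
  have h1 := hlim (s • ξ)
  have h2 : Filter.Tendsto (fun t : ℝ => Ψ ((t * s) • ξ) / (t * s) ^ 2) Filter.atTop
      (nhds (Ψinf ξ)) := (hlim ξ).comp (Filter.Tendsto.atTop_mul_const hs Filter.tendsto_id)
  have h3 : Filter.Tendsto (fun t : ℝ => s ^ 2 * (Ψ ((t * s) • ξ) / (t * s) ^ 2)) Filter.atTop
      (nhds (s ^ 2 * Ψinf ξ)) := h2.const_mul _
  have h4 : (fun t : ℝ => s ^ 2 * (Ψ ((t * s) • ξ) / (t * s) ^ 2))
      = fun t : ℝ => Ψ (t • s • ξ) / t ^ 2 := by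
    funext t
    rw [smul_smul]
    rcases eq_or_ne t 0 with rfl | ht
    · simp
    · rw [mul_comm t s]  -- careful
      field_simp
  rw [h4] at h3
  exact tendsto_nhds_unique h1 h3

end Aux2
section Aux3
variable {m n : ℕ} {c : ℝ} {Ψ Ψinf : Matrix (Fin m) (Fin n) ℝ → ℝ}

lemma sqrt_psinf_lb (hc : 1 ≤ c) (hlb : ∀ ξ, max ((frob ξ) ^ 2 / c - c) 0 ≤ Ψ ξ)
    (hlim : ∀ ξ, Filter.Tendsto (fun t : ℝ => Ψ (t • ξ) / t ^ 2) Filter.atTop (nhds (Ψinf ξ)))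
    (η : Matrix (Fin m) (Fin n) ℝ) : frob η ≤ Real.sqrt c * Real.sqrt (Ψinf η) := by
  have hc0 : (0:ℝ) < c := by linarith
  have h1 := psinf_lb hc hlb hlim η
  have h2 : Real.sqrt ((frob η) ^ 2 / c) ≤ Real.sqrt (Ψinf η) := Real.sqrt_le_sqrt h1
  rw [Real.sqrt_div (by positivity), Real.sqrt_sq (frob_nonneg η)] at h2
  have hsc : (0:ℝ) < Real.sqrt c := Real.sqrt_pos.2 hc0
  calc frob η = Real.sqrt c * (frob η / Real.sqrt c) := by field_simp
    _ ≤ Real.sqrt c * Real.sqrt (Ψinf η) := by gcongr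

lemma sqrt_psinf_ub (hc : 1 ≤ c) (hub : ∀ ξ, Ψ ξ ≤ c * ((frob ξ) ^ 2 + 1))
    (hlim : ∀ ξ, Filter.Tendsto (fun t : ℝ => Ψ (t • ξ) / t ^ 2) Filter.atTop (nhds (Ψinf ξ)))
    (η : Matrix (Fin m) (Fin n) ℝ) : Real.sqrt (Ψinf η) ≤ Real.sqrt c * frob η := by
  have hc0 : (0:ℝ) < c := by linarith
  have h1 := psinf_ub hc hub hlim η
  have h2 : Real.sqrt (Ψinf η) ≤ Real.sqrt (c * (frob η) ^ 2) := Real.sqrt_le_sqrt h1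
  rwa [Real.sqrt_mul hc0.le, Real.sqrt_sq (frob_nonneg η)] at h2

lemma key_comp (hc : 1 ≤ c) (hΨ0 : ∀ ξ, 0 ≤ Ψ ξ)
    (hlb : ∀ ξ, max ((frob ξ) ^ 2 / c - c) 0 ≤ Ψ ξ)
    (hub : ∀ ξ, Ψ ξ ≤ c * ((frob ξ) ^ 2 + 1))
    (hlim : ∀ ξ, Filter.Tendsto (fun t : ℝ => Ψ (t • ξ) / t ^ 2) Filter.atTop (nhds (Ψinf ξ)))
    (hunif : ∀ δ > (0 : ℝ), ∃ tδ > (0 : ℝ), ∀ ξ, tδ ≤ frob ξ → |Ψ ξ - Ψinf ξ| ≤ δ * (frob ξ) ^ 2)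
    {ε : ℝ} (hε : 0 < ε) :
    ∃ C : ℝ, 0 ≤ C ∧ ∀ η, Real.sqrt (Ψinf η) ≤ (1 + ε) * Real.sqrt (Ψ η) + C ∧
      Real.sqrt (Ψ η) ≤ (1 + ε) * Real.sqrt (Ψinf η) + C := by
  have hc0 : (0:ℝ) < c := by linarith
  set δ : ℝ := (ε / (1 + ε)) ^ 2 / c with hδdef
  have hδpos : 0 < δ := by positivity
  obtain ⟨t₀, ht₀, hδ⟩ := hunif δ hδpos
  refine ⟨Real.sqrt (c * (t₀ ^ 2 + 1)) + Real.sqrt c * t₀, by positivity, fun η => ?_⟩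
  set C := Real.sqrt (c * (t₀ ^ 2 + 1)) + Real.sqrt c * t₀ with hC
  have hPn := hΨ0 η
  have hIn : 0 ≤ Ψinf η := psinf_nonneg hc hlb hlim η
  have hsP : 0 ≤ Real.sqrt (Ψ η) := Real.sqrt_nonneg _
  have hsI : 0 ≤ Real.sqrt (Ψinf η) := Real.sqrt_nonneg _
  rcases lt_or_ge (frob η) t₀ with hsm | hbg
  · have h1 : Real.sqrt (Ψ η) ≤ Real.sqrt (c * (t₀ ^ 2 + 1)) := by
      refine Real.sqrt_le_sqrt ((hub η).trans ?_)
      have h0 : frob η ^ 2 ≤ t₀ ^ 2 := pow_le_pow_left₀ (frob_nonneg η) hsm.le 2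
      nlinarith
    have h2 : Real.sqrt (Ψinf η) ≤ Real.sqrt c * t₀ := by
      refine (sqrt_psinf_ub hc hub hlim η).trans ?_
      have : (0:ℝ) ≤ Real.sqrt c := Real.sqrt_nonneg c
      nlinarith
    have hCsplit : 0 ≤ Real.sqrt (c * (t₀ ^ 2 + 1)) := Real.sqrt_nonneg _
    have hCsplit2 : 0 ≤ Real.sqrt c * t₀ := by positivity
    constructor <;> nlinarith
  · have h := hδ η hbg
    have hA : |Real.sqrt (Ψ η) - Real.sqrt (Ψinf η)| ≤ Real.sqrt (δ * (frob η) ^ 2) := by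
      refine (abs_sqrt_sub_sqrt hPn hIn).trans (Real.sqrt_le_sqrt ?_)
      exact h
    have hrw : Real.sqrt (δ * (frob η) ^ 2) = Real.sqrt δ * frob η := by
      rw [Real.sqrt_mul hδpos.le, Real.sqrt_sq (frob_nonneg η)]
    have hsc : (0:ℝ) < Real.sqrt c := Real.sqrt_pos.2 hc0
    have hδeq : Real.sqrt δ = ε / ((1 + ε) * Real.sqrt c) := by
      have : δ = (ε / ((1 + ε) * Real.sqrt c)) ^ 2 := by
        rw [div_pow, mul_pow, Real.sq_sqrt hc0.le, hδdef, div_pow]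
        field_simp
      rw [this, Real.sqrt_sq (by positivity)]
    have hfr : frob η ≤ Real.sqrt c * Real.sqrt (Ψinf η) := sqrt_psinf_lb hc hlb hlim η
    have hB : |Real.sqrt (Ψ η) - Real.sqrt (Ψinf η)| ≤ ε / (1 + ε) * Real.sqrt (Ψinf η) := by
      rw [hrw, hδeq] at hA
      refine hA.trans ?_
      calc ε / ((1 + ε) * Real.sqrt c) * frob η
          ≤ ε / ((1 + ε) * Real.sqrt c) * (Real.sqrt c * Real.sqrt (Ψinf η)) := by
            refine mul_le_mul_of_nonneg_left hfr (by positivity)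
        _ = ε / (1 + ε) * Real.sqrt (Ψinf η) := by field_simp
    rw [abs_le] at hB
    obtain ⟨hB1, hB2⟩ := hB
    have hε1 : (0:ℝ) < 1 + ε := by linarith
    have hCnn : (0:ℝ) ≤ C := by rw [hC]; positivity
    have hkey1 : Real.sqrt (Ψinf η) ≤ (1 + ε) * Real.sqrt (Ψ η) := by
      have h' : Real.sqrt (Ψinf η) * (1 / (1 + ε)) ≤ Real.sqrt (Ψ η) := by
        have heq : Real.sqrt (Ψinf η) * (1 / (1 + ε))
            = Real.sqrt (Ψinf η) - ε / (1 + ε) * Real.sqrt (Ψinf η) := by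
          field_simp
          ring
        rw [heq]
        linarith
      calc Real.sqrt (Ψinf η) = (1 + ε) * (Real.sqrt (Ψinf η) * (1 / (1 + ε))) := by
            field_simp
        _ ≤ (1 + ε) * Real.sqrt (Ψ η) := by gcongr
    have hdiv : ε / (1 + ε) ≤ ε := div_le_self hε.le (by linarith)
    have hkey2 : ε / (1 + ε) * Real.sqrt (Ψinf η) ≤ ε * Real.sqrt (Ψinf η) :=
      mul_le_mul_of_nonneg_right hdiv hsI
    constructor
    · linarith
    · linarith

end Aux3
section Aux4
variable {m n : ℕ}

lemma zero_mem_testFuns : (0 : (Fin n → ℝ) → (Fin m → ℝ)) ∈ testFuns m n := by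
  refine ⟨contDiff_const, ?_, ?_⟩
  · have h : tsupport (0 : (Fin n → ℝ) → (Fin m → ℝ)) = ∅ := by
      simp [tsupport, Function.support_zero]
    rw [HasCompactSupport, h]
    exact isCompact_empty
  · have h : tsupport (0 : (Fin n → ℝ) → (Fin m → ℝ)) = ∅ := by
      simp [tsupport, Function.support_zero]
    rw [h]
    exact empty_subset _

lemma gradMatrix_zero (x : Fin n → ℝ) :
    gradMatrix (0 : (Fin n → ℝ) → (Fin m → ℝ)) x = 0 := by
  funext i j
  simp [gradMatrix, Pi.zero_def, fderiv_const]

lemma smul_mem_testFuns {φ : (Fin n → ℝ) → (Fin m → ℝ)} (hφ : φ ∈ testFuns m n) (t : ℝ) :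
    t • φ ∈ testFuns m n := by
  obtain ⟨h1, h2, h3⟩ := hφ
  refine ⟨h1.const_smul t, h2.mono (Function.support_const_smul_subset t φ), ?_⟩
  exact (closure_mono (Function.support_const_smul_subset t φ)).trans h3

lemma gradMatrix_smul {φ : (Fin n → ℝ) → (Fin m → ℝ)} (hφ : ContDiff ℝ (⊤ : ℕ∞) φ) (t : ℝ)
    (x : Fin n → ℝ) : gradMatrix (t • φ) x = t • gradMatrix φ x := by
  have hd : DifferentiableAt ℝ φ x := (hφ.differentiable (by simp)).differentiableAt
  have h : fderiv ℝ (fun y => t • φ y) x = t • fderiv ℝ φ x := fderiv_const_smul hd t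
  funext i j
  show fderiv ℝ (fun y => t • φ y) x (Pi.single j 1) i = _
  rw [h]
  simp [gradMatrix, ContinuousLinearMap.smul_apply]

lemma gradMatrix_continuous {φ : (Fin n → ℝ) → (Fin m → ℝ)} (hφ : ContDiff ℝ (⊤ : ℕ∞) φ) :
    Continuous (gradMatrix φ) := by
  have h := hφ.continuous_fderiv (by simp)
  refine continuous_pi fun i => continuous_pi fun j => ?_
  exact (continuous_apply i).comp
    (((ContinuousLinearMap.apply ℝ (Fin m → ℝ) (Pi.single j 1)).continuous).comp h)

lemma measurableSet_unitCube : MeasurableSet (unitCube n) :=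
  MeasurableSet.univ_pi fun _ => measurableSet_Ioo

lemma volume_unitCube : volume (unitCube n) = 1 := by
  rw [unitCube, volume_pi_pi]
  simp [Real.volume_Ioo]

lemma volume_unitCube_ne_top : volume (unitCube n) ≠ ⊤ := by
  rw [volume_unitCube]; exact ENNReal.one_ne_top

lemma unitCube_subset_Icc : unitCube n ⊆ Set.univ.pi fun _ => Set.Icc (0:ℝ) 1 := by
  intro x hx
  intro i _
  exact ⟨(hx i trivial).1.le, (hx i trivial).2.le⟩

lemma integrableOn_comp {h : Matrix (Fin m) (Fin n) ℝ → ℝ}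
    {K : ℝ} (hK : 0 ≤ K) (hbd : ∀ η, |h η| ≤ K * (frob η + 1))
    (ζ : Matrix (Fin m) (Fin n) ℝ) {φ : (Fin n → ℝ) → (Fin m → ℝ)} (hφ : φ ∈ testFuns m n)
    (hmeas : Measurable fun x => h (ζ + gradMatrix φ x)) :
    IntegrableOn (fun x => h (ζ + gradMatrix φ x)) (unitCube n) := by
  have hgc : Continuous fun x => ζ + gradMatrix φ x :=
    continuous_const.add (gradMatrix_continuous hφ.1)
  have hKc : IsCompact (Set.univ.pi fun _ : Fin n => Set.Icc (0:ℝ) 1) :=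
    isCompact_univ_pi fun _ => isCompact_Icc
  obtain ⟨M, hM⟩ := hKc.exists_bound_of_continuousOn
    ((frob_continuous.comp hgc).continuousOn)
  refine Measure.integrableOn_of_bounded volume_unitCube_ne_top
    hmeas.aestronglyMeasurable (M := K * (M + 1)) ?_
  refine (ae_restrict_iff' measurableSet_unitCube).2 (Filter.Eventually.of_forall fun x hx => ?_)
  have hx' := unitCube_subset_Icc hx
  have h1 : frob (ζ + gradMatrix φ x) ≤ M := (le_abs_self _).trans (le_of_eq rfl |>.trans (hM x hx'))
  have h2 := hbd (ζ + gradMatrix φ x)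
  rw [Real.norm_eq_abs]
  refine h2.trans ?_
  have := frob_nonneg (ζ + gradMatrix φ x)
  nlinarith

lemma psinf_comp_measurable {Ψ Ψinf : Matrix (Fin m) (Fin n) ℝ → ℝ} (hΨc : Continuous Ψ)
    (hlim : ∀ ξ, Filter.Tendsto (fun t : ℝ => Ψ (t • ξ) / t ^ 2) Filter.atTop (nhds (Ψinf ξ)))
    {g : (Fin n → ℝ) → Matrix (Fin m) (Fin n) ℝ} (hg : Continuous g) :
    Measurable fun x => Real.sqrt (Ψinf (g x)) := by
  have hmeas : ∀ k : ℕ, Measurable fun x : Fin n → ℝ =>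
      Ψ ((k:ℝ) • g x) / (k:ℝ) ^ 2 := fun k =>
    ((hΨc.comp (hg.const_smul ((k:ℝ)))).div_const _).measurable
  have h1 : Measurable fun x => Ψinf (g x) := by
    refine measurable_of_tendsto_metrizable hmeas (tendsto_pi_nhds.2 fun x => ?_)
    exact (hlim (g x)).comp tendsto_natCast_atTop_atTop
  exact Real.continuous_sqrt.measurable.comp h1

end Aux4
section Aux5
variable {m n : ℕ} {c : ℝ} {Ψ Ψinf : Matrix (Fin m) (Fin n) ℝ → ℝ}

lemma qcEnv_set_nonempty (h : Matrix (Fin m) (Fin n) ℝ → ℝ) (ζ : Matrix (Fin m) (Fin n) ℝ) :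
    {y | ∃ φ ∈ testFuns m n, y = ∫ x in unitCube n, h (ζ + gradMatrix φ x)}.Nonempty :=
  ⟨_, 0, zero_mem_testFuns, rfl⟩

lemma qcEnv_set_bddBelow {h : Matrix (Fin m) (Fin n) ℝ → ℝ} (hnn : ∀ η, 0 ≤ h η)
    (ζ : Matrix (Fin m) (Fin n) ℝ) :
    BddBelow {y | ∃ φ ∈ testFuns m n, y = ∫ x in unitCube n, h (ζ + gradMatrix φ x)} := by
  refine ⟨0, fun y hy => ?_⟩
  obtain ⟨φ, hφ, rfl⟩ := hy
  exact setIntegral_nonneg measurableSet_unitCube fun x _ => hnn _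

lemma qcEnv_le {h : Matrix (Fin m) (Fin n) ℝ → ℝ} (hnn : ∀ η, 0 ≤ h η)
    (ζ : Matrix (Fin m) (Fin n) ℝ) {φ : (Fin n → ℝ) → (Fin m → ℝ)} (hφ : φ ∈ testFuns m n) :
    qcEnv h ζ ≤ ∫ x in unitCube n, h (ζ + gradMatrix φ x) :=
  csInf_le (qcEnv_set_bddBelow hnn ζ) ⟨φ, hφ, rfl⟩

lemma qcEnv_nonneg {h : Matrix (Fin m) (Fin n) ℝ → ℝ} (hnn : ∀ η, 0 ≤ h η)
    (ζ : Matrix (Fin m) (Fin n) ℝ) : 0 ≤ qcEnv h ζ := by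
  refine le_csInf (qcEnv_set_nonempty h ζ) fun y hy => ?_
  obtain ⟨φ, hφ, rfl⟩ := hy
  exact setIntegral_nonneg measurableSet_unitCube fun x _ => hnn _

lemma sqrtΨ_bd (hc : 1 ≤ c) (hΨ0 : ∀ ξ, 0 ≤ Ψ ξ) (hub : ∀ ξ, Ψ ξ ≤ c * ((frob ξ) ^ 2 + 1))
    (η : Matrix (Fin m) (Fin n) ℝ) : |Real.sqrt (Ψ η)| ≤ Real.sqrt c * (frob η + 1) := by
  have hc0 : (0:ℝ) < c := by linarith
  have hfr := frob_nonneg η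
  rw [abs_of_nonneg (Real.sqrt_nonneg _)]
  have h1 : Real.sqrt (Ψ η) ≤ Real.sqrt (c * (frob η + 1) ^ 2) := by
    refine Real.sqrt_le_sqrt ((hub η).trans ?_)
    nlinarith
  rwa [Real.sqrt_mul hc0.le, Real.sqrt_sq (by linarith)] at h1

lemma sqrtΨinf_bd (hc : 1 ≤ c) (hub : ∀ ξ, Ψ ξ ≤ c * ((frob ξ) ^ 2 + 1))
    (hlb : ∀ ξ, max ((frob ξ) ^ 2 / c - c) 0 ≤ Ψ ξ)
    (hlim : ∀ ξ, Filter.Tendsto (fun t : ℝ => Ψ (t • ξ) / t ^ 2) Filter.atTop (nhds (Ψinf ξ)))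
    (η : Matrix (Fin m) (Fin n) ℝ) : |Real.sqrt (Ψinf η)| ≤ Real.sqrt c * (frob η + 1) := by
  rw [abs_of_nonneg (Real.sqrt_nonneg _)]
  refine (sqrt_psinf_ub hc hub hlim η).trans ?_
  have h1 : (0:ℝ) ≤ Real.sqrt c := Real.sqrt_nonneg c
  nlinarith [frob_nonneg η]

lemma sqrtΨinf_smul (hlim : ∀ ξ, Filter.Tendsto (fun t : ℝ => Ψ (t • ξ) / t ^ 2) Filter.atTop (nhds (Ψinf ξ)))
    {t : ℝ} (ht : 0 < t) (η : Matrix (Fin m) (Fin n) ℝ) :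
    Real.sqrt (Ψinf (t • η)) = t * Real.sqrt (Ψinf η) := by
  rw [psinf_smul hlim ht η, Real.sqrt_mul (sq_nonneg t), Real.sqrt_sq ht.le]

lemma qcEnv_bounds (hc : 1 ≤ c) (hΨc : Continuous Ψ) (hΨ0 : ∀ ξ, 0 ≤ Ψ ξ)
    (hlb : ∀ ξ, max ((frob ξ) ^ 2 / c - c) 0 ≤ Ψ ξ)
    (hub : ∀ ξ, Ψ ξ ≤ c * ((frob ξ) ^ 2 + 1))
    (hlim : ∀ ξ, Filter.Tendsto (fun t : ℝ => Ψ (t • ξ) / t ^ 2) Filter.atTop (nhds (Ψinf ξ)))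
    {ε C : ℝ} (hε : 0 < ε) (hC0 : 0 ≤ C)
    (hC : ∀ η, Real.sqrt (Ψinf η) ≤ (1 + ε) * Real.sqrt (Ψ η) + C ∧
      Real.sqrt (Ψ η) ≤ (1 + ε) * Real.sqrt (Ψinf η) + C)
    (ξ : Matrix (Fin m) (Fin n) ℝ) {t : ℝ} (ht : 0 < t) :
    qcEnv (fun η => Real.sqrt (Ψ η)) (t • ξ)
        ≤ (1 + ε) * (t * qcEnv (fun η => Real.sqrt (Ψinf η)) ξ) + C ∧
    t * qcEnv (fun η => Real.sqrt (Ψinf η)) ξ - C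
        ≤ (1 + ε) * qcEnv (fun η => Real.sqrt (Ψ η)) (t • ξ) := by
  have hc0 : (0:ℝ) < c := by linarith
  have hsc : (0:ℝ) ≤ Real.sqrt c := Real.sqrt_nonneg c
  have hFnn : ∀ η, (0:ℝ) ≤ Real.sqrt (Ψ η) := fun η => Real.sqrt_nonneg _
  have hFinn : ∀ η, (0:ℝ) ≤ Real.sqrt (Ψinf η) := fun η => Real.sqrt_nonneg _
  have hε1 : (0:ℝ) < 1 + ε := by linarith
  -- integrability facts
  have hintF : ∀ (ζ : Matrix (Fin m) (Fin n) ℝ) (φ : (Fin n → ℝ) → (Fin m → ℝ)),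
      φ ∈ testFuns m n →
      IntegrableOn (fun x => Real.sqrt (Ψ (ζ + gradMatrix φ x))) (unitCube n) := by
    intro ζ φ hφ
    exact integrableOn_comp hsc (sqrtΨ_bd hc hΨ0 hub) ζ hφ
      ((Real.continuous_sqrt.comp hΨc).comp
        (continuous_const.add (gradMatrix_continuous hφ.1))).measurable
  have hintFi : ∀ (ζ : Matrix (Fin m) (Fin n) ℝ) (φ : (Fin n → ℝ) → (Fin m → ℝ)),
      φ ∈ testFuns m n →
      IntegrableOn (fun x => Real.sqrt (Ψinf (ζ + gradMatrix φ x))) (unitCube n) := by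
    intro ζ φ hφ
    exact integrableOn_comp hsc (sqrtΨinf_bd hc hub hlb hlim) ζ hφ
      (psinf_comp_measurable hΨc hlim (continuous_const.add (gradMatrix_continuous hφ.1)))
  have hvol : ((volume (unitCube n)).toReal : ℝ) = 1 := by
    rw [volume_unitCube]; simp
  constructor
  · -- upper bound
    have hle : ∀ ψ ∈ testFuns m n, qcEnv (fun η => Real.sqrt (Ψ η)) (t • ξ)
        ≤ (1 + ε) * (t * (∫ x in unitCube n, Real.sqrt (Ψinf (ξ + gradMatrix ψ x)))) + C := by
      intro ψ hψ
      have hψt := smul_mem_testFuns hψ t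
      have h1 := qcEnv_le hFnn (t • ξ) hψt
      have h2 : ∀ x, Real.sqrt (Ψ (t • ξ + gradMatrix (t • ψ) x))
          ≤ (1 + ε) * (t * Real.sqrt (Ψinf (ξ + gradMatrix ψ x))) + C := by
        intro x
        rw [gradMatrix_smul hψ.1, ← smul_add]
        have h3 := (hC (t • (ξ + gradMatrix ψ x))).2
        rwa [sqrtΨinf_smul hlim ht] at h3
      have hint2 : IntegrableOn (fun x => (1 + ε) *
          (t * Real.sqrt (Ψinf (ξ + gradMatrix ψ x))) + C) (unitCube n) := by
        refine Integrable.add ?_ (integrableOn_const ?_)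
        · exact (((hintFi ξ ψ hψ).const_mul t).const_mul (1 + ε))
        · rw [volume_unitCube]; exact ENNReal.one_ne_top
      have hint1 : IntegrableOn (fun x => Real.sqrt (Ψ (t • ξ + gradMatrix (t • ψ) x)))
          (unitCube n) := hintF (t • ξ) (t • ψ) hψt
      have h4 := setIntegral_mono_on hint1 hint2 measurableSet_unitCube fun x _ => h2 x
      have h5 : (∫ x in unitCube n, ((1 + ε) *
          (t * Real.sqrt (Ψinf (ξ + gradMatrix ψ x))) + C))
          = (1 + ε) * (t * (∫ x in unitCube n, Real.sqrt (Ψinf (ξ + gradMatrix ψ x)))) + C := by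
        rw [integral_add (((hintFi ξ ψ hψ).const_mul t).const_mul (1 + ε))
          (integrableOn_const (by rw [volume_unitCube]; exact ENNReal.one_ne_top))]
        rw [integral_const, Measure.real, Measure.restrict_apply_univ, hvol, integral_const_mul, integral_const_mul]
        simp
      rw [h5] at h4
      exact h1.trans h4
    have hQle : (qcEnv (fun η => Real.sqrt (Ψ η)) (t • ξ) - C) / ((1 + ε) * t)
        ≤ qcEnv (fun η => Real.sqrt (Ψinf η)) ξ := by
      refine le_csInf (qcEnv_set_nonempty (fun η => Real.sqrt (Ψinf η)) ξ) fun y hy => ?_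
      obtain ⟨ψ, hψ, rfl⟩ := hy
      rw [div_le_iff₀ (by positivity)]
      nlinarith [hle ψ hψ]
    rw [div_le_iff₀ (by positivity)] at hQle
    nlinarith
  · -- lower bound
    have hle : ∀ φ ∈ testFuns m n, t * qcEnv (fun η => Real.sqrt (Ψinf η)) ξ - C
        ≤ (1 + ε) * (∫ x in unitCube n, Real.sqrt (Ψ (t • ξ + gradMatrix φ x))) := by
      intro φ hφ
      set ψ := t⁻¹ • φ with hψdef
      have hψ : ψ ∈ testFuns m n := smul_mem_testFuns hφ t⁻¹
      have hsmul : t • ψ = φ := by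
        rw [hψdef, smul_smul, mul_inv_cancel₀ ht.ne', one_smul]
      have hgr : ∀ x, t • (ξ + gradMatrix ψ x) = t • ξ + gradMatrix φ x := by
        intro x
        conv_rhs => rw [← hsmul, gradMatrix_smul hψ.1]
        rw [smul_add]
      have h1 := qcEnv_le hFinn ξ hψ
      have h2 : ∀ x, Real.sqrt (Ψinf (ξ + gradMatrix ψ x))
          ≤ (1/t) * ((1 + ε) * Real.sqrt (Ψ (t • ξ + gradMatrix φ x)) + C) := by
        intro x
        have h3 := (hC (t • ξ + gradMatrix φ x)).1
        rw [← hgr x, sqrtΨinf_smul hlim ht] at h3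
        rw [hgr x] at h3
        calc Real.sqrt (Ψinf (ξ + gradMatrix ψ x))
            = (1/t) * (t * Real.sqrt (Ψinf (ξ + gradMatrix ψ x))) := by field_simp
          _ ≤ (1/t) * ((1 + ε) * Real.sqrt (Ψ (t • ξ + gradMatrix φ x)) + C) :=
              mul_le_mul_of_nonneg_left h3 (by positivity)
      have hint1 : IntegrableOn (fun x => Real.sqrt (Ψinf (ξ + gradMatrix ψ x)))
          (unitCube n) := hintFi ξ ψ hψ
      have hint2 : IntegrableOn (fun x => (1/t) * ((1 + ε) *
          Real.sqrt (Ψ (t • ξ + gradMatrix φ x)) + C)) (unitCube n) := by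
        refine Integrable.const_mul ?_ _
        refine Integrable.add ((hintF (t • ξ) φ hφ).const_mul (1 + ε))
          (integrableOn_const (by rw [volume_unitCube]; exact ENNReal.one_ne_top))
      have h4 := setIntegral_mono_on hint1 hint2 measurableSet_unitCube fun x _ => h2 x
      have h5 : (∫ x in unitCube n, (1/t) * ((1 + ε) *
          Real.sqrt (Ψ (t • ξ + gradMatrix φ x)) + C))
          = (1/t) * ((1 + ε) * (∫ x in unitCube n,
            Real.sqrt (Ψ (t • ξ + gradMatrix φ x))) + C) := by
        rw [integral_const_mul]
        rw [integral_add ((hintF (t • ξ) φ hφ).const_mul (1 + ε))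
          (integrableOn_const (by rw [volume_unitCube]; exact ENNReal.one_ne_top))]
        rw [integral_const, Measure.real, Measure.restrict_apply_univ, hvol, integral_const_mul]
        simp
      rw [h5] at h4
      have h6 := h1.trans h4
      have hI0 : 0 ≤ ∫ x in unitCube n, Real.sqrt (Ψ (t • ξ + gradMatrix φ x)) :=
        setIntegral_nonneg measurableSet_unitCube fun x _ => hFnn _
      have h7 : t * (1/t * ((1 + ε) * (∫ x in unitCube n,
          Real.sqrt (Ψ (t • ξ + gradMatrix φ x))) + C))
          = (1 + ε) * (∫ x in unitCube n, Real.sqrt (Ψ (t • ξ + gradMatrix φ x))) + C := by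
        field_simp
      nlinarith [mul_le_mul_of_nonneg_left h6 ht.le, h7]
    have hQle : (t * qcEnv (fun η => Real.sqrt (Ψinf η)) ξ - C) / (1 + ε)
        ≤ qcEnv (fun η => Real.sqrt (Ψ η)) (t • ξ) := by
      refine le_csInf (qcEnv_set_nonempty (fun η => Real.sqrt (Ψ η)) (t • ξ)) fun y hy => ?_
      obtain ⟨φ, hφ, rfl⟩ := hy
      rw [div_le_iff₀ hε1]
      nlinarith [hle φ hφ]
    rw [div_le_iff₀ hε1] at hQle
    nlinarith

end Aux5
section Main
variable {m n : ℕ} {c : ℝ} {Ψ Ψinf : Matrix (Fin m) (Fin n) ℝ → ℝ}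

lemma recession_sqrt (hΨ0 : ∀ ξ, 0 ≤ Ψ ξ)
    (hlim : ∀ ξ, Filter.Tendsto (fun t : ℝ => Ψ (t • ξ) / t ^ 2) Filter.atTop (nhds (Ψinf ξ)))
    (ξ : Matrix (Fin m) (Fin n) ℝ) :
    recession (fun η => Real.sqrt (Ψ η)) ξ = Real.sqrt (Ψinf ξ) := by
  have h1 : Filter.Tendsto (fun t : ℝ => Real.sqrt (Ψ (t • ξ) / t ^ 2)) Filter.atTop
      (nhds (Real.sqrt (Ψinf ξ))) := (hlim ξ).sqrt
  have h2 : Filter.Tendsto (fun t : ℝ => Real.sqrt (Ψ (t • ξ)) / t) Filter.atTop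
      (nhds (Real.sqrt (Ψinf ξ))) := by
    refine h1.congr' ?_
    filter_upwards [Filter.eventually_gt_atTop (0:ℝ)] with t ht
    rw [Real.sqrt_div (hΨ0 _), Real.sqrt_sq ht.le]
  exact h2.limsup_eq

theorem stmt12' (hc : 1 ≤ c) (hΨc : Continuous Ψ) (hΨ0 : ∀ ξ, 0 ≤ Ψ ξ)
    (hlb : ∀ ξ, max ((frob ξ) ^ 2 / c - c) 0 ≤ Ψ ξ)
    (hub : ∀ ξ, Ψ ξ ≤ c * ((frob ξ) ^ 2 + 1))
    (hlim : ∀ ξ, Filter.Tendsto (fun t : ℝ => Ψ (t • ξ) / t ^ 2) Filter.atTop (nhds (Ψinf ξ)))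
    (hunif : ∀ δ > (0 : ℝ), ∃ tδ > (0 : ℝ), ∀ ξ, tδ ≤ frob ξ → |Ψ ξ - Ψinf ξ| ≤ δ * (frob ξ) ^ 2) :
    ∀ ξ, recession (qcEnv (fun η => Real.sqrt (Ψ η))) ξ
        = qcEnv (recession (fun η => Real.sqrt (Ψ η))) ξ := by
  intro ξ
  have hrec : recession (fun η => Real.sqrt (Ψ η)) = fun η => Real.sqrt (Ψinf η) :=
    funext fun η => recession_sqrt hΨ0 hlim η
  rw [hrec]
  set Q := qcEnv (fun η => Real.sqrt (Ψinf η)) ξ with hQ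
  have hQ0 : 0 ≤ Q := qcEnv_nonneg (fun η => Real.sqrt_nonneg _) ξ
  have htend : Filter.Tendsto (fun t : ℝ => qcEnv (fun η => Real.sqrt (Ψ η)) (t • ξ) / t)
      Filter.atTop (nhds Q) := by
    rw [Metric.tendsto_atTop]
    intro ε' hε'
    have hεpos : 0 < ε' / (2*(Q+1)) := by positivity
    obtain ⟨C, hC0, hC⟩ := key_comp hc hΨ0 hlb hub hlim hunif hεpos
    refine ⟨max 1 (2*C/ε' + 1), fun t ht => ?_⟩
    have ht1 : (1:ℝ) ≤ t := le_trans (le_max_left _ _) ht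
    have ht2 : 2*C/ε' + 1 ≤ t := le_trans (le_max_right _ _) ht
    have ht0 : (0:ℝ) < t := by linarith
    obtain ⟨hU, hL⟩ := qcEnv_bounds hc hΨc hΨ0 hlb hub hlim hεpos hC0 hC ξ ht0
    set ε := ε' / (2*(Q+1)) with hεdef
    set A := qcEnv (fun η => Real.sqrt (Ψ η)) (t • ξ) with hA
    have hA0 : 0 ≤ A := qcEnv_nonneg (fun η => Real.sqrt_nonneg _) _
    have hAt : A/t*t = A := div_mul_cancel₀ A ht0.ne'
    have hB0 : 0 ≤ A/t := by positivity
    have hCt : C ≤ ε' * (t-1) / 2 := by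
      have h8 : 2*C/ε' ≤ t - 1 := by linarith
      rw [div_le_iff₀ hε'] at h8
      linarith
    have hεQ : ε * Q < ε'/2 := by
      have h9 : ε * Q < ε * (Q+1) := mul_lt_mul_of_pos_left (by linarith) hεpos
      have h10 : ε * (Q+1) = ε'/2 := by
        rw [hεdef]
        field_simp
      linarith
    have hεQt : ε * Q * t ≤ ε'/2 * t := mul_le_mul_of_nonneg_right hεQ.le ht0.le
    rw [← hQ] at hU hL
    have hassoc : ε * (Q * t) ≤ ε'/2 * t := by nlinarith [hεQt]
    rw [Real.dist_eq, abs_lt]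
    constructor
    · by_contra hcon
      push_neg at hcon
      have hBQ : A/t ≤ Q - ε' := by linarith
      have hABt : A ≤ (Q - ε')*t := by
        rw [← hAt]
        exact mul_le_mul_of_nonneg_right hBQ ht0.le
      have hAQt : A ≤ Q*t := by nlinarith
      have hεA : ε*A ≤ ε*(Q*t) := mul_le_mul_of_nonneg_left hAQt hεpos.le
      nlinarith [hL, hABt, hεA, hassoc, hCt, hε', ht0]
    · by_contra hcon
      push_neg at hcon
      have hBQ : Q + ε' ≤ A/t := by linarith
      have hABt : (Q + ε')*t ≤ A := by
        rw [← hAt]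
        exact mul_le_mul_of_nonneg_right hBQ ht0.le
      nlinarith [hU, hABt, hassoc, hCt, hε', ht0]
  exact htend.limsup_eq

end Main
theorem stmt12 (m n : ℕ) (c : ℝ) (hc : 1 ≤ c)
    (Ψ Ψinf : Matrix (Fin m) (Fin n) ℝ → ℝ) (hΨc : Continuous Ψ)
    (hΨ0 : ∀ ξ, 0 ≤ Ψ ξ)
    (hlb : ∀ ξ, max ((frob ξ) ^ 2 / c - c) 0 ≤ Ψ ξ)
    (hub : ∀ ξ, Ψ ξ ≤ c * ((frob ξ) ^ 2 + 1))
    (hlim : ∀ ξ, Filter.Tendsto (fun t : ℝ => Ψ (t • ξ) / t ^ 2)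
      Filter.atTop (nhds (Ψinf ξ)))
    (hunif : ∀ δ > (0 : ℝ), ∃ tδ > (0 : ℝ), ∀ ξ, tδ ≤ frob ξ →
      |Ψ ξ - Ψinf ξ| ≤ δ * (frob ξ) ^ 2) :
    ∀ ξ, recession (qcEnv (fun η => Real.sqrt (Ψ η))) ξ
        = qcEnv (recession (fun η => Real.sqrt (Ψ η))) ξ :=
  stmt12' hc hΨc hΨ0 hlb hub hlim hunif
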